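/- arXiv:0902.4840 — 2 statements merged into one kernel-verified Lean document; each statement's English description precedes it below -/
import Mathlib

section
/- Assume n ≥ 4. For every k with 3 < k ≤ n, in the presented group G the element x_{13} commutes with p_{1k}p_{2k}p_{3k}: x_{13}(p_{1k}p_{2k}p_{3k}) =_R (p_{1k}p_{2k}p_{3k})x_{13}. -/
namespace PureHilden

/-- The three symbols `p`, `x`, `y`. -/
inductive Sym : Type
  | p | x | y
  deriving DecidableEq

open Sym

/-- Generators of the free group `F`:  `p_{ij}, x_{ij}, y_{ij}` for `1 ≤ i < j ≤ n`
and `t_k` for `1 ≤ k ≤ n`. -/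
inductive Gen (n : ℕ) : Type
  | pair (s : Sym) (i j : ℕ) (h : 1 ≤ i ∧ i < j ∧ j ≤ n) : Gen n
  | t (k : ℕ) (h : 1 ≤ k ∧ k ≤ n) : Gen n

/-- The free group `F` on the set `S`. -/
abbrev FG (n : ℕ) := FreeGroup (Gen n)

/-- `α_{ij}` (symmetrised: `α_{ji} = α_{ij}`); junk value `1` for invalid indices. -/
def gsym (n : ℕ) (s : Sym) (i j : ℕ) : FG n :=
  if h : 1 ≤ min i j ∧ min i j < max i j ∧ max i j ≤ n then
    FreeGroup.of (Gen.pair s (min i j) (max i j) h)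
  else 1

def P (n i j : ℕ) : FG n := gsym n Sym.p i j
def X (n i j : ℕ) : FG n := gsym n Sym.x i j
def Y (n i j : ℕ) : FG n := gsym n Sym.y i j

def T (n k : ℕ) : FG n :=
  if h : 1 ≤ k ∧ k ≤ n then FreeGroup.of (Gen.t k h) else 1

/-- `1 ≤ k ≤ n`. -/
def Idx (n k : ℕ) : Prop := 1 ≤ k ∧ k ≤ n

/-- `1 ≤ i < j ≤ n`. -/
def Idx2 (n i j : ℕ) : Prop := 1 ≤ i ∧ i < j ∧ j ≤ n

/-- `(i,j,k)` is a cyclic rotation of a strictly increasing triple. -/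
def cyc3 (i j k : ℕ) : Prop := (i < j ∧ j < k) ∨ (j < k ∧ k < i) ∨ (k < i ∧ i < j)

/-- `(i,j,k,l)` is a cyclic rotation of a strictly increasing quadruple. -/
def cyc4 (i j k l : ℕ) : Prop :=
  (i < j ∧ j < k ∧ k < l) ∨ (j < k ∧ k < l ∧ l < i) ∨
  (k < l ∧ l < i ∧ i < j) ∨ (l < i ∧ i < j ∧ j < k)

def c2A : List (Sym × Sym × Sym) :=
  [(p,p,p),(p,y,y),(x,p,p),(x,x,p),(x,y,y),(y,p,p),(y,p,x),(y,y,y)]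
def c2B : List (Sym × Sym × Sym) :=
  [(p,p,p),(p,x,y),(x,p,p),(x,p,x),(x,x,y),(y,p,p),(y,x,y),(y,y,p)]
def c2C : List (Sym × Sym × Sym) :=
  [(p,p,p),(p,x,x),(x,p,p),(x,x,x),(x,y,p),(y,p,p),(y,p,y),(y,x,x)]

/-- The allowed triples `(α,β,γ)` for relation (C2), by cyclic ordering of `(i,j,k)`. -/
def C2ok (i j k : ℕ) (a b c : Sym) : Prop :=
  (i < j ∧ j < k ∧ (a,b,c) ∈ c2A) ∨
  (j < k ∧ k < i ∧ (a,b,c) ∈ c2B) ∨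
  (k < i ∧ i < j ∧ (a,b,c) ∈ c2C)

/-- The relations `R`, encoded as the words `u * v⁻¹` for each relation `u = v`. -/
inductive Rel (n : ℕ) : FG n → Prop
  | cpt {i j k : ℕ} (hij : Idx2 n i j) (hk : Idx n k) :
      Rel n (P n i j * T n k * (T n k * P n i j)⁻¹)
  | ctt {i j : ℕ} (hi : Idx n i) (hj : Idx n j) :
      Rel n (T n i * T n j * (T n j * T n i)⁻¹)
  | cxt {i j k : ℕ} (hij : Idx2 n i j) (hk : Idx n k) (hne : k ≠ i) :
      Rel n (X n i j * T n k * (T n k * X n i j)⁻¹)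
  | cyt {i j k : ℕ} (hij : Idx2 n i j) (hk : Idx n k) (hne : k ≠ j) :
      Rel n (Y n i j * T n k * (T n k * Y n i j)⁻¹)
  | c1 (a b : Sym) {i j k l : ℕ} (hi : Idx n i) (hj : Idx n j) (hk : Idx n k)
      (hl : Idx n l) (hc : cyc4 i j k l) :
      Rel n (gsym n a i j * gsym n b k l * (gsym n b k l * gsym n a i j)⁻¹)
  | c2 (a b c : Sym) {i j k : ℕ} (hi : Idx n i) (hj : Idx n j) (hk : Idx n k)
      (h : C2ok i j k a b c) :
      Rel n (gsym n a i j * (gsym n b i k * gsym n c j k) *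
             (gsym n b i k * gsym n c j k * gsym n a i j)⁻¹)
  | c3 (a b : Sym) {i j k l : ℕ} (hi : Idx n i) (hj : Idx n j) (hk : Idx n k)
      (hl : Idx n l) (hc : cyc4 i j k l) :
      Rel n (gsym n a i k * (P n j k * gsym n b j l * (P n j k)⁻¹) *
             (P n j k * gsym n b j l * (P n j k)⁻¹ * gsym n a i k)⁻¹)
  | mx {i j : ℕ} (hij : Idx2 n i j) :
      Rel n (X n i j * P n i j * T n i * (P n i j * T n i * X n i j)⁻¹)
  | my {i j : ℕ} (hij : Idx2 n i j) :
      Rel n (Y n i j * P n i j * T n j * (P n i j * T n j * Y n i j)⁻¹)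

/-- The presented group `G = ⟨S ∣ R⟩`. -/
abbrev GG (n : ℕ) := FG n ⧸ Subgroup.normalClosure {w : FG n | Rel n w}

/-- The quotient homomorphism `π : F → G`. -/
def piG (n : ℕ) : FG n →* GG n := QuotientGroup.mk' _

/-- The map defining `Φ_{σ_m}` on generators. -/
def phiSigmaMap (n m : ℕ) : Gen n → FG n
  | Gen.pair s i j _ =>
      if i = m ∧ j = m + 1 then
        match s with
        | Sym.p => P n m (m+1)
        | Sym.x => (T n (m+1))⁻¹ * Y n m (m+1) * T n (m+1)
        | Sym.y => X n m (m+1)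
      else if i = m then gsym n s (m+1) j
      else if j = m then gsym n s (m+1) i
      else if i = m + 1 then P n m (m+1) * gsym n s m j * (P n m (m+1))⁻¹
      else if j = m + 1 then P n m (m+1) * gsym n s m i * (P n m (m+1))⁻¹
      else gsym n s i j
  | Gen.t k _ =>
      if k = m then T n (m+1) else if k = m + 1 then T n m else T n k

/-- `Φ_{σ_m} : F → F`. -/
def phiSigma (n m : ℕ) : FG n →* FG n := FreeGroup.lift (phiSigmaMap n m)

/-- The map defining `Ψ_{σ_m}` on generators. -/
def psiSigmaMap (n m : ℕ) : Gen n → FG n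
  | Gen.pair s i j _ =>
      if i = m ∧ j = m + 1 then
        match s with
        | Sym.p => P n m (m+1)
        | Sym.x => Y n m (m+1)
        | Sym.y => T n m * X n m (m+1) * (T n m)⁻¹
      else if i = m then (P n m (m+1))⁻¹ * gsym n s (m+1) j * P n m (m+1)
      else if j = m then (P n m (m+1))⁻¹ * gsym n s (m+1) i * P n m (m+1)
      else if i = m + 1 then gsym n s m j
      else if j = m + 1 then gsym n s m i
      else gsym n s i j
  | Gen.t k _ =>
      if k = m then T n (m+1) else if k = m + 1 then T n m else T n k

/-- `Ψ_{σ_m} : F → F`. -/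
def psiSigma (n m : ℕ) : FG n →* FG n := FreeGroup.lift (psiSigmaMap n m)

/-- The map defining `Φ_{τ_m}` on generators. -/
def phiTauMap (n m : ℕ) : Gen n → FG n
  | Gen.pair s i j _ =>
      match s with
      | Sym.p => P n i j
      | Sym.x => if m = i then (X n i j)⁻¹ * P n i j else X n i j
      | Sym.y => if m = j then (Y n i j)⁻¹ * P n i j else Y n i j
  | Gen.t k _ => T n k

/-- `Φ_{τ_m} : F → F`. -/
def phiTau (n m : ℕ) : FG n →* FG n := FreeGroup.lift (phiTauMap n m)

/-- The map defining `Ψ_{τ_m}` on generators. -/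
def psiTauMap (n m : ℕ) : Gen n → FG n
  | Gen.pair s i j _ =>
      match s with
      | Sym.p => P n i j
      | Sym.x => if m = i then P n i j * (X n i j)⁻¹ else X n i j
      | Sym.y => if m = j then P n i j * (Y n i j)⁻¹ else Y n i j
  | Gen.t k _ => T n k

/-- `Ψ_{τ_m} : F → F`. -/
def psiTau (n m : ℕ) : FG n →* FG n := FreeGroup.lift (psiTauMap n m)

/-! `p₁ₖp₂ₖp₃ₖ = (p₁ₖp₂ₖp₁ₖ⁻¹)(p₁ₖp₃ₖ)`, and `x₁₃` commutes with each factor: with the first by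
(C3) for the cyclically ordered quadruple `(3,k,1,2)`, with the second by (C2) for `(1,3,k)` and
`(α,β,γ) = (x,p,p)`. -/

theorem commute_mul_mul_of_commute_conj {G : Type*} [Group G] {x a b c : G}
    (hb : Commute x (a * b * a⁻¹)) (hc : Commute x (a * c)) : Commute x (a * b * c) := by
  simpa [mul_assoc] using hb.mul_right hc

theorem commute_piG_of_rel {n : ℕ} {u v : FG n} (h : Rel n (u * v * (v * u)⁻¹)) :
    Commute (piG n u) (piG n v) := by
  have h1 : piG n (u * v * (v * u)⁻¹) = 1 :=
    (QuotientGroup.eq_one_iff _).mpr (Subgroup.subset_normalClosure h)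
  rw [map_mul, map_inv, mul_inv_eq_one, map_mul, map_mul] at h1
  exact h1

theorem gsym_comm (n : ℕ) (s : Sym) (i j : ℕ) : gsym n s i j = gsym n s j i := by
  unfold gsym
  rw [min_comm, max_comm]

theorem P_comm (n i j : ℕ) : P n i j = P n j i := gsym_comm n Sym.p i j

theorem X_comm (n i j : ℕ) : X n i j = X n j i := gsym_comm n Sym.x i j

theorem commute_x13_p1k_mul_p3k {n k : ℕ} (hk : 3 < k) (hkn : k ≤ n) :
    Commute (piG n (X n 1 3)) (piG n (P n 1 k) * piG n (P n 3 k)) := by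
  rw [← map_mul]
  exact commute_piG_of_rel
    (Rel.c2 Sym.x Sym.p Sym.p (n := n) (k := k) ⟨le_rfl, by omega⟩ ⟨by omega, by omega⟩
      ⟨by omega, hkn⟩ (Or.inl ⟨by omega, hk, by decide⟩))

theorem commute_x13_conj_p2k {n k : ℕ} (hk : 3 < k) (hkn : k ≤ n) :
    Commute (piG n (X n 1 3)) (piG n (P n 1 k) * piG n (P n 2 k) * (piG n (P n 1 k))⁻¹) := by
  have h : Commute (piG n (X n 3 1)) (piG n (P n k 1 * P n k 2 * (P n k 1)⁻¹)) :=
    commute_piG_of_rel (Rel.c3 Sym.x Sym.p (i := 3) (j := k) (k := 1) (l := 2)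
      ⟨by omega, by omega⟩ ⟨by omega, hkn⟩ ⟨le_rfl, by omega⟩ ⟨by omega, by omega⟩
      (Or.inr (Or.inr (Or.inl ⟨by omega, by omega, hk⟩))))
  rwa [X_comm, P_comm n k 1, P_comm n k 2, map_mul, map_mul, map_inv] at h

theorem x13_comm_p1kp2kp3k_general (n : ℕ) (k : ℕ)
    (hk : 3 < k ∧ k ≤ n) :
    piG n (X n 1 3 * (P n 1 k * P n 2 k * P n 3 k)) =
    piG n (P n 1 k * P n 2 k * P n 3 k * X n 1 3) := by
  simp only [map_mul]
  exact commute_mul_mul_of_commute_conj (commute_x13_conj_p2k hk.1 hk.2)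
    (commute_x13_p1k_mul_p3k hk.1 hk.2)

/-- STATEMENT 9: For `n ≥ 4` and `3 < k ≤ n`, in `G` the element `x₁₃` commutes
with `p₁ₖp₂ₖp₃ₖ`. -/
theorem x13_comm_p1kp2kp3k (n : ℕ) (hn : 4 ≤ n) (k : ℕ)
    (hk : 3 < k ∧ k ≤ n) :
    piG n (X n 1 3 * (P n 1 k * P n 2 k * P n 3 k)) =
    piG n (P n 1 k * P n 2 k * P n 3 k * X n 1 3) :=
  x13_comm_p1kp2kp3k_general n k hk

end PureHilden
end

section
/- For all indices 1 ≤ i < j < k ≤ n, in the presented group G one has p_{jk} y_{ij} p_{jk}^{-1} x_{jk} =_R x_{jk} y_{ij}. -/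
namespace PureHilden

open Sym

theorem conj_mul_eq_of_commute {G : Type*} [Group G] {y q r x : G}
    (hr : Commute y (q * r)) (hx : Commute y (q * x)) :
    r * y * r⁻¹ * x = x * y :=
  calc r * y * r⁻¹ * x = q⁻¹ * (q * r * y) * r⁻¹ * x := by group
    _ = q⁻¹ * (y * (q * r)) * r⁻¹ * x := by rw [hr.eq]
    _ = q⁻¹ * (y * (q * x)) := by group
    _ = q⁻¹ * (q * x * y) := by rw [hx.eq]
    _ = x * y := by group

theorem piG_eq_of_rel {n : ℕ} {u v : FG n} (hw : Rel n (u * v⁻¹)) : piG n u = piG n v := by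
  have hw' : piG n (u * v⁻¹) = 1 :=
    (QuotientGroup.eq_one_iff _).mpr (Subgroup.subset_normalClosure hw)
  rwa [map_mul, map_inv, mul_inv_eq_one] at hw'

theorem commute_piG_of_mem_c2A {n i j k : ℕ} (h : 1 ≤ i ∧ i < j ∧ j < k ∧ k ≤ n)
    {a b c : Sym} (habc : (a, b, c) ∈ c2A) :
    Commute (piG n (gsym n a i j)) (piG n (gsym n b i k * gsym n c j k)) := by
  obtain ⟨hi, hij, hjk, hkn⟩ := h
  have hrel := piG_eq_of_rel (Rel.c2 a b c (n := n) ⟨hi, by omega⟩ ⟨by omega, by omega⟩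
    ⟨by omega, hkn⟩ (Or.inl ⟨hij, hjk, habc⟩))
  rwa [map_mul, map_mul (piG n)] at hrel

/-- Relation (C2) for `(y,p,p)` makes `p_jk y_ij p_jk⁻¹ = p_ik⁻¹ y_ij p_ik`; relation (C2) for
`(y,p,x)` says that `y_ij` commutes with `p_ik x_jk`, i.e. `p_ik⁻¹ y_ij p_ik x_jk = x_jk y_ij`. -/
theorem stmt13_general (n : ℕ) (i j k : ℕ)
    (h : 1 ≤ i ∧ i < j ∧ j < k ∧ k ≤ n) :
    piG n (P n j k * Y n i j * (P n j k)⁻¹ * X n j k) =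
    piG n (X n j k * Y n i j) := by
  have hp := commute_piG_of_mem_c2A h (a := y) (b := p) (c := p) (by simp [c2A])
  have hx := commute_piG_of_mem_c2A h (a := y) (b := p) (c := x) (by simp [c2A])
  simp only [map_mul, map_inv] at hp hx ⊢
  exact conj_mul_eq_of_commute hp hx

/-- STATEMENT 13: For `1 ≤ i < j < k ≤ n`, in `G`:
`p_jk y_ij p_jk⁻¹ x_jk =_R x_jk y_ij`. -/
theorem stmt13 (n : ℕ) (hn : 2 ≤ n) (i j k : ℕ)
    (h : 1 ≤ i ∧ i < j ∧ j < k ∧ k ≤ n) :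
    piG n (P n j k * Y n i j * (P n j k)⁻¹ * X n j k) =
    piG n (X n j k * Y n i j) :=
  stmt13_general n i j k h

end PureHilden
end
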